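/- Let 𝒟 be a finite nonempty type with a distinguished default element ⊥ ∈ 𝒟, let n ∈ ℕ, let Ω be a finite type, let ε ≥ 0, and let Y : (Fin n → 𝒟) → Ω → ℝ be a mechanism (nonnegative with ∑_{ω∈Ω} Y(x)(ω) = 1 for every database x : Fin n → 𝒟). Suppose Y satisfies (1/2 − 1/(e^{ε}+1))-semantic privacy: for every prior b : (Fin n → 𝒟) → ℝ (nonnegative with ∑_x b(x) = 1), every i : Fin n, every ω ∈ Ω such that ∑_z Y(z)(ω)·b(z) > 0 and ∑_z Y(Function.update z i ⊥)(ω)·b(z) > 0, and every set S of databases, |∑_{x∈S} Y(x)(ω)·b(x)/∑_z Y(z)(ω)·b(z) − ∑_{x∈S} Y(Function.update x i ⊥)(ω)·b(x)/∑_z Y(Function.update z i ⊥)(ω)·b(z)| ≤ 1/2 − 1/(e^{ε}+1). Then Y satisfies ε-differential privacy in the following sense: for every x : Fin n → 𝒟, every i : Fin n, every v ∈ 𝒟, and every ω ∈ Ω with Y(Function.update x i ⊥)(ω) > 0, Y(x)(ω) ≤ e^{ε} · Y(Function.update x i v)(ω). -/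

import Mathlib

/-!
Take the prior that gives weight 1/2 to each of the neighbouring databases `x` and
`x' = x[i ↦ v]`. They have the same `x_{-i}`, so in Game i the posterior of `{x}` is exactly 1/2,
while in Game 0 it is `Y x ω / (Y x ω + Y x' ω)`. A gap of at most `1/2 - 1/(e^ε + 1)` between
the two forces `Y x ω / (Y x ω + Y x' ω) ≤ e^ε / (e^ε + 1)`, that is `Y x ω ≤ e^ε Y x' ω`.
-/

open Finset

theorem le_mul_of_abs_div_add_sub_half_le {a a' E : ℝ} (ha : 0 < a) (ha' : 0 ≤ a') (hE : 0 ≤ E)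
    (h : |a / (a + a') - 1 / 2| ≤ 1 / 2 - 1 / (E + 1)) : a ≤ E * a' := by
  have hbound : a / (a + a') ≤ E / (E + 1) := by
    have hEq : E / (E + 1) = 1 - 1 / (E + 1) := by field_simp; ring
    linarith [(abs_le.mp h).2]
  rw [div_le_div_iff₀ (by linarith) (by linarith)] at hbound
  linear_combination hbound

/-- With `L = (Y · ω)` this is the Game-0 posterior of `S`, with
`L = fun z ↦ Y (z.update i ⊥) ω` the Game-i one. -/
noncomputable def posterior {α : Type*} [Fintype α] (L b : α → ℝ) (S : Finset α) : ℝ :=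
  (∑ x ∈ S, L x * b x) / ∑ z, L z * b z

section TwoPointPrior

variable {α : Type*} [DecidableEq α]

noncomputable def twoPointPrior (x x' : α) : α → ℝ :=
  Pi.single x (1 / 2) + Pi.single x' (1 / 2)

theorem twoPointPrior_nonneg (x x' z : α) : 0 ≤ twoPointPrior x x' z := by
  simp only [twoPointPrior, Pi.add_apply, Pi.single_apply]
  split_ifs <;> norm_num

variable [Fintype α]

theorem sum_mul_twoPointPrior (f : α → ℝ) (x x' : α) :
    ∑ z, f z * twoPointPrior x x' z = (f x + f x') / 2 := by
  simp only [twoPointPrior, Pi.add_apply, mul_add, sum_add_distrib, Pi.single_apply,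
    mul_ite, mul_zero, sum_ite_eq', mem_univ, if_true]
  ring

theorem sum_twoPointPrior (x x' : α) : ∑ z, twoPointPrior x x' z = 1 := by
  simpa using sum_mul_twoPointPrior (fun _ ↦ (1 : ℝ)) x x'

theorem posterior_twoPointPrior_singleton {x x' : α} (hne : x ≠ x') (L : α → ℝ) :
    posterior L (twoPointPrior x x') {x} = L x / (L x + L x') := by
  rw [posterior, sum_singleton, sum_mul_twoPointPrior, twoPointPrior, Pi.add_apply,
    Pi.single_eq_same, Pi.single_eq_of_ne hne, add_zero, div_eq_mul_one_div (L x + L x') 2,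
    mul_div_mul_right _ _ (by norm_num : (1 / 2 : ℝ) ≠ 0)]

theorem le_mul_of_abs_posterior_twoPointPrior_sub_le {L L' : α → ℝ} {x x' : α} {E : ℝ}
    (hne : x ≠ x') (hx : 0 < L x) (hx' : 0 ≤ L x') (hL' : L' x' = L' x) (hL'x : L' x ≠ 0)
    (hE : 0 ≤ E)
    (h : |posterior L (twoPointPrior x x') {x} - posterior L' (twoPointPrior x x') {x}|
      ≤ 1 / 2 - 1 / (E + 1)) :
    L x ≤ E * L x' := by
  have hhalf : L' x / (L' x + L' x) = 1 / 2 := by field_simp; ring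
  rw [posterior_twoPointPrior_singleton hne, posterior_twoPointPrior_singleton hne, hL',
    hhalf] at h
  exact le_mul_of_abs_div_add_sub_half_le hx hx' hE h

end TwoPointPrior

theorem semantic_privacy_implies_dp_general
    {D : Type*} [Fintype D] (dflt : D) (n : ℕ)
    {Ω : Type*} (ε : ℝ) (hε : 0 ≤ ε)
    (Y : (Fin n → D) → Ω → ℝ)
    (hYnn : ∀ x ω, 0 ≤ Y x ω)
    (hSP : ∀ (b : (Fin n → D) → ℝ), (∀ x, 0 ≤ b x) → (∑ x, b x = 1) →
      ∀ (i : Fin n) (ω : Ω),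
        0 < ∑ z, Y z ω * b z →
        0 < ∑ z, Y (Function.update z i dflt) ω * b z →
        ∀ S : Finset (Fin n → D),
          |(∑ x ∈ S, Y x ω * b x) / (∑ z, Y z ω * b z) -
              (∑ x ∈ S, Y (Function.update x i dflt) ω * b x) /
                (∑ z, Y (Function.update z i dflt) ω * b z)|
            ≤ 1 / 2 - 1 / (Real.exp ε + 1)) :
    ∀ (x : Fin n → D) (i : Fin n) (v : D) (ω : Ω),
      0 < Y (Function.update x i dflt) ω →
      Y x ω ≤ Real.exp ε * Y (Function.update x i v) ω := by
  intro x i v ω hpos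
  classical
  set x' := Function.update x i v
  by_cases hxx : x = x'
  · rw [← hxx]
    exact le_mul_of_one_le_left (hYnn x ω) (Real.one_le_exp hε)
  rcases (hYnn x ω).eq_or_lt with hx0 | hx0
  · rw [← hx0]
    exact mul_nonneg (Real.exp_pos ε).le (hYnn x' ω)
  have hupd : Function.update x' i dflt = Function.update x i dflt := Function.update_idem ..
  have hden : 0 < ∑ z, Y z ω * twoPointPrior x x' z := by
    rw [sum_mul_twoPointPrior]
    linarith [hYnn x' ω]
  have hden' : 0 < ∑ z, Y (Function.update z i dflt) ω * twoPointPrior x x' z := by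
    rw [sum_mul_twoPointPrior, hupd]
    linarith
  exact le_mul_of_abs_posterior_twoPointPrior_sub_le hxx hx0 (hYnn x' ω) (congrArg (Y · ω) hupd)
    hpos.ne' (Real.exp_pos ε).le
    (hSP _ (twoPointPrior_nonneg x x') (sum_twoPointPrior x x') i ω hden hden' {x})

theorem semantic_privacy_implies_dp
    {D : Type*} [Fintype D] [Nonempty D] (dflt : D) (n : ℕ)
    {Ω : Type*} [Fintype Ω] (ε : ℝ) (hε : 0 ≤ ε)
    (Y : (Fin n → D) → Ω → ℝ)
    (hYnn : ∀ x ω, 0 ≤ Y x ω) (hYsum : ∀ x, ∑ ω, Y x ω = 1)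
    (hSP : ∀ (b : (Fin n → D) → ℝ), (∀ x, 0 ≤ b x) → (∑ x, b x = 1) →
      ∀ (i : Fin n) (ω : Ω),
        0 < ∑ z, Y z ω * b z →
        0 < ∑ z, Y (Function.update z i dflt) ω * b z →
        ∀ S : Finset (Fin n → D),
          |(∑ x ∈ S, Y x ω * b x) / (∑ z, Y z ω * b z) -
              (∑ x ∈ S, Y (Function.update x i dflt) ω * b x) /
                (∑ z, Y (Function.update z i dflt) ω * b z)|
            ≤ 1 / 2 - 1 / (Real.exp ε + 1)) :
    ∀ (x : Fin n → D) (i : Fin n) (v : D) (ω : Ω),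
      0 < Y (Function.update x i dflt) ω →
      Y x ω ≤ Real.exp ε * Y (Function.update x i v) ω :=
  semantic_privacy_implies_dp_general dflt n ε hε Y hYnn hSP
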